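/- arXiv:2208.12411 — 6 statements merged into one kernel-verified Lean document; each statement's English description precedes it below -/
import Mathlib

section
/- Degree bound from the spectral gap (eq. (3.10) of [HT2021], used in Appendix B): if λ ≥ 0 is a spectral-gap lower bound for (k, M), then for every α ∈ I the degree of connectivity satisfies deg_α(k) := ∑_{γ≠α} k_{αγ} M_γ ≥ ζ λ. -/
open Finset

/-- Degree bound from the spectral gap (eq. (3.10) of [HT2021], used in Appendix B). -/
theorem stmt_4 {I : Type*} [Fintype I] [DecidableEq I] [Nonempty I] (hcard : 1 < Fintype.card I)
    (M : I → ℝ) (hM : ∀ α, 0 < M α)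
    (k : I → I → ℝ) (hk_nonneg : ∀ α β, 0 ≤ k α β) (hk_symm : ∀ α β, k α β = k β α)
    (lam : ℝ) (hlam : 0 ≤ lam)
    (hgap : ∀ y : I → ℝ,
      lam * ∑ α, ∑ β ∈ univ.filter (fun β => β ≠ α), (y α - y β) ^ 2 * M α * M β
        ≤ (∑ α, M α) *
            ∑ α, ∑ β ∈ univ.filter (fun β => β ≠ α), k α β * (y α - y β) ^ 2 * M α * M β)
    (ζ : ℝ) (hζ : ζ = 1 - (univ.sup' univ_nonempty M) / (∑ α, M α)) :
    ∀ α, ζ * lam ≤ ∑ γ ∈ univ.filter (fun γ => γ ≠ α), k α γ * M γ := by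
  intro α
  classical
  set S : ℝ := ∑ a, M a with hS
  have hSpos : 0 < S := Finset.sum_pos (fun i _ => hM i) univ_nonempty
  set y : I → ℝ := fun b => if b = α then (1:ℝ) else 0 with hy
  have hyα : y α = 1 := if_pos rfl
  have hyb : ∀ b, b ≠ α → y b = 0 := fun b h => if_neg h
  set T : ℝ := ∑ b ∈ univ.filter (fun b => b ≠ α), M b with hT
  set D : ℝ := ∑ γ ∈ univ.filter (fun γ => γ ≠ α), k α γ * M γ with hD
  have key := hgap y
  have h1 : ∑ a, ∑ b ∈ univ.filter (fun b => b ≠ a), (y a - y b) ^ 2 * M a * M b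
      = 2 * (M α * T) := by
    rw [Finset.sum_eq_add_sum_sdiff_singleton_of_mem (Finset.mem_univ α)]
    have hA : ∑ b ∈ univ.filter (fun b => b ≠ α), (y α - y b) ^ 2 * M α * M b = M α * T := by
      rw [hT, Finset.mul_sum]
      refine Finset.sum_congr rfl fun b hb => ?_
      rw [hyα, hyb b (Finset.mem_filter.mp hb).2]
      ring
    have hB : ∑ a ∈ univ \ {α}, ∑ b ∈ univ.filter (fun b => b ≠ a),
        (y a - y b) ^ 2 * M a * M b = T * M α := by
      rw [hT, Finset.sum_mul]
      have : (univ \ {α} : Finset I) = univ.filter (fun b => b ≠ α) := by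
        ext x; simp
      rw [this]
      refine Finset.sum_congr rfl fun a ha => ?_
      have haα : a ≠ α := (Finset.mem_filter.mp ha).2
      have hmem : α ∈ univ.filter (fun b => b ≠ a) := by simp [Ne.symm haα]
      have := Finset.sum_eq_single_of_mem (s := univ.filter (fun b => b ≠ a))
        (f := fun b => (y a - y b) ^ 2 * M a * M b) α hmem
        (fun b _ hbα => by simp only [hyb a haα, hyb b hbα]; ring)
      rw [this]; simp only [hyα, hyb a haα]; ring
    rw [hA, hB]; ring
  have h2 : ∑ a, ∑ b ∈ univ.filter (fun b => b ≠ a), k a b * (y a - y b) ^ 2 * M a * M b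
      = 2 * (M α * D) := by
    rw [Finset.sum_eq_add_sum_sdiff_singleton_of_mem (Finset.mem_univ α)]
    have hA : ∑ b ∈ univ.filter (fun b => b ≠ α), k α b * (y α - y b) ^ 2 * M α * M b
        = M α * D := by
      rw [hD, Finset.mul_sum]
      refine Finset.sum_congr rfl fun b hb => ?_
      rw [hyα, hyb b (Finset.mem_filter.mp hb).2]
      ring
    have hB : ∑ a ∈ univ \ {α}, ∑ b ∈ univ.filter (fun b => b ≠ a),
        k a b * (y a - y b) ^ 2 * M a * M b = D * M α := by
      rw [hD, Finset.sum_mul]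
      have : (univ \ {α} : Finset I) = univ.filter (fun b => b ≠ α) := by
        ext x; simp
      rw [this]
      refine Finset.sum_congr rfl fun a ha => ?_
      have haα : a ≠ α := (Finset.mem_filter.mp ha).2
      have hmem : α ∈ univ.filter (fun b => b ≠ a) := by simp [Ne.symm haα]
      have := Finset.sum_eq_single_of_mem (s := univ.filter (fun b => b ≠ a))
        (f := fun b => k a b * (y a - y b) ^ 2 * M a * M b) α hmem
        (fun b _ hbα => by simp only [hyb a haα, hyb b hbα]; ring)
      rw [this]; simp only [hyα, hyb a haα, hk_symm a α]; ring
    rw [hA, hB]; ring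
  rw [h1, h2] at key
  have hMαpos := hM α
  have hkey2 : lam * T ≤ S * D := by nlinarith
  have hST : S = M α + T := by
    rw [hS, hT, Finset.filter_ne', ← Finset.add_sum_erase univ M (Finset.mem_univ α)]
  have hsup : M α ≤ univ.sup' univ_nonempty M := Finset.le_sup' M (Finset.mem_univ α)
  have hζS : ζ * S = S - univ.sup' univ_nonempty M := by
    rw [hζ]; field_simp
  nlinarith [mul_le_mul_of_nonneg_left hsup hlam, hSpos.le]
end

section
/- Weighted Poincaré inequality for multi-species velocity fluctuations (Lemma 3.2 of [HT2021], as used in Appendix B): if λ ≥ 0 is a spectral-gap lower bound for (k, M), then ∑_{α,β∈I} k_{αβ} ∬ |u_α(x) − u_β(y)|² dμ_α(x) dμ_β(y) ≥ (ζλ/M) ∑_{α,β∈I} ∬ |u_α(x) − u_β(y)|² dμ_α(x) dμ_β(y), where the sums run over all ordered pairs (α,β), including α = β. -/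
/-!
By the parallel-axis identity, splitting each `u α` into its mean `v α = ⨍ u α ∂μ α` and its
fluctuation, the double integral for the pair `(α, β)` equals
`M β * s α + M α * s β + M α * M β * ‖v α - v β‖ ^ 2`, where `s α ≥ 0` is the moment of inertia
of `u α` about `v α`. The spectral gap applied coordinatewise to the means controls the last
term (using `ζ ≤ 1`); applied to the indicator of a single species it gives
`ζ * λ ≤ ∑ β, k α β * M β`, which controls the fluctuation terms.
-/

open MeasureTheory Finset
open scoped RealInnerProductSpace

section Inertia

variable {Ω E : Type*} [MeasurableSpace Ω] {μ ν : Measure Ω} [IsFiniteMeasure μ] [IsFiniteMeasure ν]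
  [NormedAddCommGroup E] [InnerProductSpace ℝ E] [CompleteSpace E] {u w : Ω → E}

theorem integral_norm_sub_sq_eq_add_integral_norm_sub_average_sq (hu : MemLp u 2 μ) (c : E) :
    ∫ x, ‖c - u x‖ ^ 2 ∂μ
      = μ.real Set.univ * ‖c - ⨍ y, u y ∂μ‖ ^ 2 + ∫ x, ‖u x - ⨍ y, u y ∂μ‖ ^ 2 ∂μ := by
  set m := ⨍ y, u y ∂μ
  have hu_m : MemLp (fun x => u x - m) 2 μ := hu.sub (memLp_const m)
  have h_inner : Integrable (fun x => ⟪c - m, u x - m⟫) μ :=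
    (hu_m.integrable one_le_two).const_inner _
  have h_sq : Integrable (fun x => ‖u x - m‖ ^ 2) μ := hu_m.integrable_norm_pow two_ne_zero
  calc ∫ x, ‖c - u x‖ ^ 2 ∂μ
      = ∫ x, (‖c - m‖ ^ 2 - 2 * ⟪c - m, u x - m⟫ + ‖u x - m‖ ^ 2) ∂μ := by
        congr 1 with x
        rw [← norm_sub_sq_real, sub_sub_sub_cancel_right]
    _ = μ.real Set.univ * ‖c - m‖ ^ 2 - 2 * ⟪c - m, ∫ x, u x - m ∂μ⟫
          + ∫ x, ‖u x - m‖ ^ 2 ∂μ := by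
        have h_lin : Integrable (fun x => ‖c - m‖ ^ 2 - 2 * ⟪c - m, u x - m⟫) μ :=
          (integrable_const _).sub (h_inner.const_mul 2)
        rw [integral_add h_lin h_sq, integral_sub (integrable_const _) (h_inner.const_mul 2),
          integral_const, integral_const_mul, integral_inner (hu_m.integrable one_le_two), smul_eq_mul]
    _ = μ.real Set.univ * ‖c - m‖ ^ 2 + ∫ x, ‖u x - m‖ ^ 2 ∂μ := by
        rw [integral_sub_average, inner_zero_right, mul_zero, sub_zero]

theorem integral_integral_norm_sub_sq (hu : MemLp u 2 μ) (hw : MemLp w 2 ν) :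
    ∫ x, ∫ y, ‖u x - w y‖ ^ 2 ∂ν ∂μ
      = ν.real Set.univ * ∫ x, ‖u x - ⨍ z, u z ∂μ‖ ^ 2 ∂μ
        + μ.real Set.univ * ∫ y, ‖w y - ⨍ z, w z ∂ν‖ ^ 2 ∂ν
        + μ.real Set.univ * ν.real Set.univ * ‖(⨍ z, u z ∂μ) - ⨍ z, w z ∂ν‖ ^ 2 := by
  have h_sq : Integrable (fun x => ‖u x - ⨍ z, w z ∂ν‖ ^ 2) μ :=
    (hu.sub (memLp_const _)).integrable_norm_pow two_ne_zero
  simp_rw [integral_norm_sub_sq_eq_add_integral_norm_sub_average_sq hw]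
  rw [integral_add (h_sq.const_mul _) (integrable_const _), integral_const_mul, integral_const,
    smul_eq_mul]
  simp_rw [norm_sub_rev (u _) (⨍ z, w z ∂ν)]
  rw [integral_norm_sub_sq_eq_add_integral_norm_sub_average_sq hu, norm_sub_rev]
  ring

end Inertia

section SpectralGap

variable {I : Type*} [Fintype I] {M : I → ℝ} {k : I → I → ℝ} {lam : ℝ}

/-- The variational bound (2.4) for `λ₂(Δ_M K)`, with the vanishing diagonal terms included. -/
def IsSpectralGapBound (M : I → ℝ) (k : I → I → ℝ) (lam : ℝ) : Prop :=
  ∀ y : I → ℝ, lam * ∑ α, ∑ β, M α * M β * (y α - y β) ^ 2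
    ≤ (∑ α, M α) * ∑ α, ∑ β, k α β * (M α * M β * (y α - y β) ^ 2)

theorem sum_sum_filter_ne_eq [DecidableEq I] {f : I → I → ℝ} (hf : ∀ α, f α α = 0) :
    ∑ α, ∑ β ∈ univ.filter (fun β => β ≠ α), f α β = ∑ α, ∑ β, f α β :=
  sum_congr rfl fun α _ => by rw [filter_ne', sum_erase _ (hf α)]

theorem isSpectralGapBound_of_offDiag [DecidableEq I]
    (h : ∀ y : I → ℝ,
      lam * ∑ α, ∑ β ∈ univ.filter (fun β => β ≠ α), (y α - y β) ^ 2 * M α * M β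
        ≤ (∑ α, M α) *
            ∑ α, ∑ β ∈ univ.filter (fun β => β ≠ α), k α β * (y α - y β) ^ 2 * M α * M β) :
    IsSpectralGapBound M k lam := by
  intro y
  have hy := h y
  rw [sum_sum_filter_ne_eq (by simp), sum_sum_filter_ne_eq (by simp)] at hy
  convert hy using 4 <;> ring

theorem sum_sum_mul_sq_sub_indicator [DecidableEq I] (w : I → I → ℝ) (α : I) :
    ∑ γ, ∑ δ, w γ δ * ((if γ = α then 1 else 0) - (if δ = α then 1 else 0)) ^ 2
      = ∑ δ, w α δ + ∑ γ, w γ α - 2 * w α α := by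
  have h : ∀ γ δ, w γ δ * ((if γ = α then (1 : ℝ) else 0) - (if δ = α then 1 else 0)) ^ 2
      = (if γ = α then w γ δ else 0) + (if δ = α then w γ δ else 0)
        - 2 * (if γ = α then (if δ = α then w γ δ else 0) else 0) := by
    intro γ δ; split_ifs <;> ring
  simp only [h, sum_add_distrib, sum_sub_distrib, ← mul_sum, sum_ite_eq', mem_univ, if_true]
  rw [sum_comm]
  simp [sum_ite_eq']

theorem IsSpectralGapBound.sum_norm_sq_le (h : IsSpectralGapBound M k lam) {ι : Type*} [Fintype ι]
    (y : I → EuclideanSpace ℝ ι) :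
    lam * ∑ α, ∑ β, M α * M β * ‖y α - y β‖ ^ 2
      ≤ (∑ α, M α) * ∑ α, ∑ β, k α β * (M α * M β * ‖y α - y β‖ ^ 2) := by
  have hcoord := sum_le_sum fun i (_ : i ∈ univ) => h fun α => y α i
  simp only [← mul_sum] at hcoord
  have h_swap : ∀ f : I → I → ι → ℝ, ∑ α, ∑ β, ∑ i, f α β i = ∑ i, ∑ α, ∑ β, f α β i :=
    fun f => (sum_congr rfl fun _ _ => sum_comm).trans sum_comm
  simpa only [EuclideanSpace.real_norm_sq_eq, PiLp.sub_apply, mul_sum, h_swap] using hcoord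

theorem IsSpectralGapBound.mul_sum_sub_le (h : IsSpectralGapBound M k lam)
    (hM : ∀ α, 0 < M α) (hk : ∀ α, 0 ≤ k α α) (hk_symm : ∀ α β, k α β = k β α) (α : I) :
    lam * (∑ β, M β - M α) ≤ (∑ β, M β) * ∑ β, k α β * M β := by
  classical
  have hy := h fun γ => if γ = α then 1 else 0
  simp only [← mul_assoc (k _ _), sum_sum_mul_sq_sub_indicator] at hy
  have h_mass : ∑ δ, M α * M δ + ∑ γ, M γ * M α - 2 * (M α * M α)
      = 2 * M α * (∑ β, M β - M α) := by
    rw [← mul_sum, ← sum_mul]; ring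
  have h_rate : ∑ δ, k α δ * M α * M δ + ∑ γ, k γ α * M γ * M α - 2 * (k α α * M α * M α)
      = 2 * M α * (∑ β, k α β * M β - k α α * M α) := by
    have h_row : ∑ δ, k α δ * M α * M δ = M α * ∑ β, k α β * M β := by
      rw [mul_sum]; exact sum_congr rfl fun _ _ => by ring
    have h_col : ∑ γ, k γ α * M γ * M α = M α * ∑ β, k α β * M β := by
      rw [mul_sum]; exact sum_congr rfl fun γ _ => by rw [hk_symm]; ring
    rw [h_row, h_col]; ring
  rw [h_mass, h_rate, mul_left_comm lam, mul_left_comm (∑ β, M β)] at hy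
  calc lam * (∑ β, M β - M α)
      ≤ (∑ β, M β) * (∑ β, k α β * M β - k α α * M α) :=
        le_of_mul_le_mul_left hy (by linarith [hM α])
    _ ≤ (∑ β, M β) * ∑ β, k α β * M β :=
        mul_le_mul_of_nonneg_left (sub_le_self _ (mul_nonneg (hk α) (hM α).le))
          (sum_pos (fun β _ => hM β) ⟨α, mem_univ α⟩).le

theorem IsSpectralGapBound.mul_le_sum_mul [Nonempty I] (h : IsSpectralGapBound M k lam)
    (hM : ∀ α, 0 < M α) (hk : ∀ α, 0 ≤ k α α) (hk_symm : ∀ α β, k α β = k β α) (hlam : 0 ≤ lam)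
    (α : I) :
    (1 - univ.sup' univ_nonempty M / ∑ β, M β) * lam ≤ ∑ β, k α β * M β := by
  have h_mass : 0 < ∑ β, M β := sum_pos (fun β _ => hM β) univ_nonempty
  have h_max : M α / ∑ β, M β ≤ univ.sup' univ_nonempty M / ∑ β, M β :=
    div_le_div_of_nonneg_right (le_sup' M (mem_univ α)) h_mass.le
  calc (1 - univ.sup' univ_nonempty M / ∑ β, M β) * lam
      ≤ (1 - M α / ∑ β, M β) * lam := by gcongr
    _ = lam * (∑ β, M β - M α) / ∑ β, M β := by field_simp
    _ ≤ ∑ β, k α β * M β := by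
        rw [div_le_iff₀ h_mass, mul_comm _ (∑ β, M β)]
        exact h.mul_sum_sub_le hM hk hk_symm α

theorem IsSpectralGapBound.mul_sum_sum_le [Nonempty I] (h : IsSpectralGapBound M k lam)
    (hM : ∀ α, 0 < M α) (hk : ∀ α β, 0 ≤ k α β) (hk_symm : ∀ α β, k α β = k β α)
    (hlam : 0 ≤ lam) {s : I → ℝ} (hs : ∀ α, 0 ≤ s α) {ι : Type*} [Fintype ι]
    (v : I → EuclideanSpace ℝ ι) :
    (1 - univ.sup' univ_nonempty M / ∑ β, M β) * lam / (∑ β, M β) *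
        ∑ α, ∑ β, (M β * s α + M α * s β + M α * M β * ‖v α - v β‖ ^ 2)
      ≤ ∑ α, ∑ β, k α β * (M β * s α + M α * s β + M α * M β * ‖v α - v β‖ ^ 2) := by
  set ζ := 1 - univ.sup' univ_nonempty M / ∑ β, M β
  have h_mass : 0 < ∑ β, M β := sum_pos (fun β _ => hM β) univ_nonempty
  have hζ : ζ ≤ 1 := by
    have h_max := le_sup' M (mem_univ (Classical.arbitrary I))
    have : 0 ≤ univ.sup' univ_nonempty M / ∑ β, M β :=
      div_nonneg ((hM _).le.trans h_max) h_mass.le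
    linarith
  have h_left : ζ * lam / (∑ β, M β) * ∑ α, ∑ β, M β * s α
      ≤ ∑ α, ∑ β, k α β * (M β * s α) := by
    rw [mul_sum]
    refine sum_le_sum fun α _ => ?_
    calc ζ * lam / (∑ β, M β) * ∑ β, M β * s α = ζ * lam * s α := by
          rw [← sum_mul]; field_simp
      _ ≤ (∑ β, k α β * M β) * s α :=
          mul_le_mul_of_nonneg_right (h.mul_le_sum_mul hM (fun α => hk α α) hk_symm hlam α) (hs α)
      _ = ∑ β, k α β * (M β * s α) := by
          rw [sum_mul]; exact sum_congr rfl fun _ _ => by ring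
  have h_right : ζ * lam / (∑ β, M β) * ∑ α, ∑ β, M α * s β
      ≤ ∑ α, ∑ β, k α β * (M α * s β) := by
    rw [sum_comm]
    refine h_left.trans_eq ?_
    rw [sum_comm]
    exact sum_congr rfl fun _ _ => sum_congr rfl fun _ _ => by rw [hk_symm]
  have h_mean : ζ * lam / (∑ β, M β) * ∑ α, ∑ β, M α * M β * ‖v α - v β‖ ^ 2
      ≤ ∑ α, ∑ β, k α β * (M α * M β * ‖v α - v β‖ ^ 2) := by
    have h_nonneg : 0 ≤ ∑ α, ∑ β, M α * M β * ‖v α - v β‖ ^ 2 :=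
      sum_nonneg fun α _ => sum_nonneg fun β _ => by have := hM α; have := hM β; positivity
    calc ζ * lam / (∑ β, M β) * ∑ α, ∑ β, M α * M β * ‖v α - v β‖ ^ 2
        ≤ lam / (∑ β, M β) * ∑ α, ∑ β, M α * M β * ‖v α - v β‖ ^ 2 := by
          gcongr; exact mul_le_of_le_one_left hlam hζ
      _ ≤ ∑ α, ∑ β, k α β * (M α * M β * ‖v α - v β‖ ^ 2) := by
          rw [div_mul_eq_mul_div, div_le_iff₀ h_mass, mul_comm _ (∑ β, M β)]
          exact h.sum_norm_sq_le v
  simp only [mul_add, sum_add_distrib]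
  linarith

end SpectralGap

theorem stmt_5_general {I : Type*} [Fintype I] [DecidableEq I] [Nonempty I]
    (M : I → ℝ) (hM : ∀ α, 0 < M α)
    (k : I → I → ℝ) (hk_nonneg : ∀ α β, 0 ≤ k α β) (hk_symm : ∀ α β, k α β = k β α)
    (lam : ℝ) (hlam : 0 ≤ lam)
    (hgap : ∀ y : I → ℝ,
      lam * ∑ α, ∑ β ∈ univ.filter (fun β => β ≠ α), (y α - y β) ^ 2 * M α * M β
        ≤ (∑ α, M α) *
            ∑ α, ∑ β ∈ univ.filter (fun β => β ≠ α), k α β * (y α - y β) ^ 2 * M α * M β)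
    (ζ : ℝ) (hζ : ζ = 1 - (univ.sup' univ_nonempty M) / (∑ α, M α))
    {d : ℕ}
    (μ : I → Measure (EuclideanSpace ℝ (Fin d)))
    [∀ α, IsFiniteMeasure (μ α)]
    (hμ : ∀ α, ((μ α) Set.univ).toReal = M α)
    (u : I → EuclideanSpace ℝ (Fin d) → EuclideanSpace ℝ (Fin d))
    (hu_meas : ∀ α, Measurable (u α))
    (hu_int : ∀ α, Integrable (fun x => ‖u α x‖ ^ 2) (μ α)) :
    (ζ * lam / (∑ α, M α)) *
        ∑ α, ∑ β, ∫ x, ∫ y, ‖u α x - u β y‖ ^ 2 ∂(μ β) ∂(μ α)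
      ≤ ∑ α, ∑ β, k α β * ∫ x, ∫ y, ‖u α x - u β y‖ ^ 2 ∂(μ β) ∂(μ α) := by
  have hL2 : ∀ α, MemLp (u α) 2 (μ α) := fun α =>
    (memLp_two_iff_integrable_sq_norm (hu_meas α).aestronglyMeasurable).2 (hu_int α)
  simp only [integral_integral_norm_sub_sq (hL2 _) (hL2 _), measureReal_def, hμ]
  subst hζ
  exact (isSpectralGapBound_of_offDiag hgap).mul_sum_sum_le hM hk_nonneg hk_symm hlam
    (fun α => integral_nonneg fun x => sq_nonneg _) fun α => ⨍ x, u α x ∂μ α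

/-- Weighted Poincaré inequality for multi-species velocity fluctuations
(Lemma 3.2 of [HT2021], as used in Appendix B). -/
theorem stmt_5 {I : Type*} [Fintype I] [DecidableEq I] [Nonempty I]
    (hcard : 1 < Fintype.card I)
    (M : I → ℝ) (hM : ∀ α, 0 < M α)
    (k : I → I → ℝ) (hk_nonneg : ∀ α β, 0 ≤ k α β) (hk_symm : ∀ α β, k α β = k β α)
    (lam : ℝ) (hlam : 0 ≤ lam)
    (hgap : ∀ y : I → ℝ,
      lam * ∑ α, ∑ β ∈ univ.filter (fun β => β ≠ α), (y α - y β) ^ 2 * M α * M β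
        ≤ (∑ α, M α) *
            ∑ α, ∑ β ∈ univ.filter (fun β => β ≠ α), k α β * (y α - y β) ^ 2 * M α * M β)
    (ζ : ℝ) (hζ : ζ = 1 - (univ.sup' univ_nonempty M) / (∑ α, M α))
    {d : ℕ} (hd : 1 ≤ d)
    (μ : I → Measure (EuclideanSpace ℝ (Fin d)))
    [∀ α, IsFiniteMeasure (μ α)]
    (hμ : ∀ α, ((μ α) Set.univ).toReal = M α)
    (u : I → EuclideanSpace ℝ (Fin d) → EuclideanSpace ℝ (Fin d))
    (hu_meas : ∀ α, Measurable (u α))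
    (hu_int : ∀ α, Integrable (fun x => ‖u α x‖ ^ 2) (μ α)) :
    (ζ * lam / (∑ α, M α)) *
        ∑ α, ∑ β, ∫ x, ∫ y, ‖u α x - u β y‖ ^ 2 ∂(μ β) ∂(μ α)
      ≤ ∑ α, ∑ β, k α β * ∫ x, ∫ y, ‖u α x - u β y‖ ^ 2 ∂(μ β) ∂(μ α) :=
  stmt_5_general M hM k hk_nonneg hk_symm lam hlam hgap ζ hζ μ hμ u hu_meas hu_int
end

section
/- Internal-energy part of the dissipation bound (Appendix B): if λ ≥ 0 is a spectral-gap lower bound for (k, M), then ∑_{α,β∈I} k_{αβ} ∬ ( e_α(x) + e_β(y) ) dμ_α(x) dμ_β(y) ≥ (ζλ/M) ∑_{α,β∈I} ∬ ( e_α(x) + e_β(y) ) dμ_α(x) dμ_β(y) = 2ζλ ∑_{α∈I} ∫ e_α dμ_α, where the sums run over all ordered pairs (α,β). -/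
/-!
Both double integrals are explicit: `∬ (e_α(x) + e_β(y)) dμ_α dμ_β = M_β E_α + M_α E_β` with
`E_α = ∫ e_α dμ_α`, so by symmetry of `k` the claim reduces to `ζλ ≤ ∑_β k_{αβ} M_β` for every `α`.
This follows by testing the spectral gap inequality on the indicator `y = 1_{α}`, which gives
`λ (M - M_α) ≤ M ∑_{β ≠ α} k_{αβ} M_β`, together with `ζ M ≤ M - M_α`.
-/

open MeasureTheory Finset

theorem integral_integral_add_eq {X Y : Type*} [MeasurableSpace X] [MeasurableSpace Y]
    {μ : Measure X} {ν : Measure Y} [IsFiniteMeasure μ] [IsFiniteMeasure ν]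
    {f : X → ℝ} {g : Y → ℝ} (hf : Integrable f μ) (hg : Integrable g ν) :
    ∫ x, ∫ y, (f x + g y) ∂ν ∂μ
      = ν.real Set.univ * ∫ x, f x ∂μ + μ.real Set.univ * ∫ y, g y ∂ν := by
  simp_rw [integral_add (integrable_const _) hg, integral_const, smul_eq_mul]
  rw [integral_add (hf.const_mul _) (integrable_const _), integral_const_mul, integral_const,
    smul_eq_mul]

section Sums

variable {ι R : Type*} [Fintype ι] [CommSemiring R]

theorem sum_sum_mul_add_mul (a b : ι → R) :
    ∑ i, ∑ j, (a j * b i + a i * b j) = 2 * (∑ i, a i) * ∑ i, b i := by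
  simp only [sum_add_distrib, ← sum_mul, ← mul_sum]
  ring

theorem sum_sum_mul_mul_add_mul_of_symm (k : ι → ι → R) (hk : ∀ i j, k i j = k j i)
    (a b : ι → R) :
    ∑ i, ∑ j, k i j * (a j * b i + a i * b j) = 2 * ∑ i, b i * ∑ j, k i j * a j := by
  have hswap : ∑ i, ∑ j, k i j * (a i * b j) = ∑ i, ∑ j, k i j * (a j * b i) := by
    rw [sum_comm]
    exact sum_congr rfl fun i _ => sum_congr rfl fun j _ => by rw [hk]
  simp_rw [mul_add, sum_add_distrib, hswap, ← two_mul]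
  congr 1
  exact sum_congr rfl fun i _ => by rw [mul_sum]; exact sum_congr rfl fun j _ => by ring

end Sums

-- `T` absorbs the weights multiplying the squared difference, in whatever order they are written.
theorem sum_sum_erase_sq_sub_single {ι : Type*} [Fintype ι] [DecidableEq ι]
    (T : ι → ι → ℝ → ℝ) (hT : ∀ i j, T i j 0 = 0) (a : ι) :
    ∑ i, ∑ j ∈ univ.erase i, T i j (((Pi.single a 1 : ι → ℝ) i - (Pi.single a 1 : ι → ℝ) j) ^ 2)
      = ∑ j ∈ univ.erase a, (T a j 1 + T j a 1) := by
  rw [← add_sum_erase univ _ (mem_univ a), sum_add_distrib]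
  congr 1
  · refine sum_congr rfl fun j hj => ?_
    simp [ne_of_mem_erase hj]
  · refine sum_congr rfl fun i hi => ?_
    have hia : i ≠ a := ne_of_mem_erase hi
    rw [sum_eq_single_of_mem a (mem_erase.2 ⟨hia.symm, mem_univ a⟩) fun j _ hja => by
      simp [hia, hja, hT]]
    simp [hia]

section SpectralGap

variable {I : Type*} [Fintype I] [DecidableEq I]

def IsSpectralGapLowerBound (k : I → I → ℝ) (M : I → ℝ) (lam : ℝ) : Prop :=
  ∀ y : I → ℝ,
    lam * ∑ α, ∑ β ∈ univ.filter (fun β => β ≠ α), (y α - y β) ^ 2 * M α * M β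
      ≤ (∑ α, M α) *
          ∑ α, ∑ β ∈ univ.filter (fun β => β ≠ α), k α β * (y α - y β) ^ 2 * M α * M β

variable {k : I → I → ℝ} {M : I → ℝ} {lam : ℝ}

theorem IsSpectralGapLowerBound.mul_sub_le (hgap : IsSpectralGapLowerBound k M lam)
    (hk : ∀ α β, k α β = k β α) {α : I} (hMα : 0 < M α) :
    lam * (∑ γ, M γ - M α) ≤ (∑ γ, M γ) * ∑ β ∈ univ.erase α, k α β * M β := by
  have h := hgap (Pi.single α 1)
  have hL := sum_sum_erase_sq_sub_single (fun γ δ s => s * M γ * M δ) (by simp) α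
  have hR := sum_sum_erase_sq_sub_single (fun γ δ s => k γ δ * s * M γ * M δ) (by simp) α
  simp only [filter_ne'] at h hL hR
  rw [hL, hR] at h
  have hL' : ∑ δ ∈ univ.erase α, (1 * M α * M δ + 1 * M δ * M α)
      = 2 * M α * (∑ γ, M γ - M α) := by
    rw [← sum_erase_eq_sub (mem_univ α), mul_sum]
    exact sum_congr rfl fun _ _ => by ring
  have hR' : ∑ δ ∈ univ.erase α, (k α δ * 1 * M α * M δ + k δ α * 1 * M δ * M α)
      = 2 * M α * ∑ β ∈ univ.erase α, k α β * M β := by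
    rw [mul_sum]
    exact sum_congr rfl fun δ _ => by rw [hk δ α]; ring
  rw [hL', hR'] at h
  refine le_of_mul_le_mul_left ?_ (by positivity : 0 < 2 * M α)
  linarith

theorem IsSpectralGapLowerBound.mul_le_sum [Nonempty I] (hgap : IsSpectralGapLowerBound k M lam)
    (hk : ∀ α β, k α β = k β α) (hk_nonneg : ∀ α β, 0 ≤ k α β) (hM : ∀ α, 0 < M α)
    (hlam : 0 ≤ lam) (α : I) :
    (1 - univ.sup' univ_nonempty M / ∑ γ, M γ) * lam ≤ ∑ β, k α β * M β := by
  set S := ∑ γ, M γ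
  have hS : 0 < S := sum_pos (fun γ _ => hM γ) univ_nonempty
  have hζ : (1 - univ.sup' univ_nonempty M / S) * S ≤ S - M α := by
    rw [sub_mul, one_mul, div_mul_cancel₀ _ hS.ne']
    linarith [le_sup' M (mem_univ α)]
  have herase : ∑ β ∈ univ.erase α, k α β * M β ≤ ∑ β, k α β * M β :=
    sum_le_sum_of_subset_of_nonneg (erase_subset _ _) fun β _ _ =>
      mul_nonneg (hk_nonneg α β) (hM β).le
  refine le_of_mul_le_mul_left ?_ hS
  calc S * ((1 - univ.sup' univ_nonempty M / S) * lam)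
      = lam * ((1 - univ.sup' univ_nonempty M / S) * S) := by ring
    _ ≤ lam * (S - M α) := mul_le_mul_of_nonneg_left hζ hlam
    _ ≤ S * ∑ β ∈ univ.erase α, k α β * M β := hgap.mul_sub_le hk (hM α)
    _ ≤ S * ∑ β, k α β * M β := mul_le_mul_of_nonneg_left herase hS.le

end SpectralGap

theorem stmt_6_general {I : Type*} [Fintype I] [DecidableEq I] [Nonempty I]
    (M : I → ℝ) (hM : ∀ α, 0 < M α)
    (k : I → I → ℝ) (hk_nonneg : ∀ α β, 0 ≤ k α β) (hk_symm : ∀ α β, k α β = k β α)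
    (lam : ℝ) (hlam : 0 ≤ lam)
    (hgap : ∀ y : I → ℝ,
      lam * ∑ α, ∑ β ∈ univ.filter (fun β => β ≠ α), (y α - y β) ^ 2 * M α * M β
        ≤ (∑ α, M α) *
            ∑ α, ∑ β ∈ univ.filter (fun β => β ≠ α), k α β * (y α - y β) ^ 2 * M α * M β)
    (ζ : ℝ) (hζ : ζ = 1 - (univ.sup' univ_nonempty M) / (∑ α, M α))
    {d : ℕ}
    (μ : I → Measure (EuclideanSpace ℝ (Fin d)))
    [∀ α, IsFiniteMeasure (μ α)]
    (hμ : ∀ α, ((μ α) Set.univ).toReal = M α)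
    (e : I → EuclideanSpace ℝ (Fin d) → ℝ)
    (he_nonneg : ∀ α x, 0 ≤ e α x)
    (he_int : ∀ α, Integrable (e α) (μ α)) :
    (ζ * lam / (∑ α, M α)) *
          ∑ α, ∑ β, ∫ x, ∫ y, (e α x + e β y) ∂(μ β) ∂(μ α)
        ≤ ∑ α, ∑ β, k α β * ∫ x, ∫ y, (e α x + e β y) ∂(μ β) ∂(μ α)
      ∧ (ζ * lam / (∑ α, M α)) *
          ∑ α, ∑ β, ∫ x, ∫ y, (e α x + e β y) ∂(μ β) ∂(μ α)
        = 2 * ζ * lam * ∑ α, ∫ x, e α x ∂(μ α) := by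
  have hS : 0 < ∑ α, M α := sum_pos (fun α _ => hM α) univ_nonempty
  have hD : ∀ α β, ∫ x, ∫ y, (e α x + e β y) ∂(μ β) ∂(μ α)
      = M β * ∫ x, e α x ∂(μ α) + M α * ∫ y, e β y ∂(μ β) := fun α β => by
    rw [integral_integral_add_eq (he_int α) (he_int β), measureReal_def, measureReal_def, hμ, hμ]
  simp_rw [hD]
  rw [sum_sum_mul_add_mul, sum_sum_mul_mul_add_mul_of_symm k hk_symm]
  have hkey : ∀ α, ζ * lam ≤ ∑ β, k α β * M β := fun α =>
    hζ ▸ IsSpectralGapLowerBound.mul_le_sum hgap hk_symm hk_nonneg hM hlam α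
  have hcancel : ζ * lam / (∑ α, M α) * (2 * (∑ α, M α) * ∑ α, ∫ x, e α x ∂(μ α))
      = 2 * ζ * lam * ∑ α, ∫ x, e α x ∂(μ α) := by
    field_simp
  refine ⟨?_, hcancel⟩
  rw [hcancel]
  calc 2 * ζ * lam * ∑ α, ∫ x, e α x ∂(μ α) = 2 * ∑ α, (∫ x, e α x ∂(μ α)) * (ζ * lam) := by
        rw [mul_sum, mul_sum]; exact sum_congr rfl fun _ _ => by ring
    _ ≤ 2 * ∑ α, (∫ x, e α x ∂(μ α)) * ∑ β, k α β * M β := by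
        gcongr with α
        exacts [integral_nonneg (he_nonneg α), hkey α]

/-- Internal-energy part of the dissipation bound (Appendix B). -/
theorem stmt_6 {I : Type*} [Fintype I] [DecidableEq I] [Nonempty I]
    (hcard : 1 < Fintype.card I)
    (M : I → ℝ) (hM : ∀ α, 0 < M α)
    (k : I → I → ℝ) (hk_nonneg : ∀ α β, 0 ≤ k α β) (hk_symm : ∀ α β, k α β = k β α)
    (lam : ℝ) (hlam : 0 ≤ lam)
    (hgap : ∀ y : I → ℝ,
      lam * ∑ α, ∑ β ∈ univ.filter (fun β => β ≠ α), (y α - y β) ^ 2 * M α * M β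
        ≤ (∑ α, M α) *
            ∑ α, ∑ β ∈ univ.filter (fun β => β ≠ α), k α β * (y α - y β) ^ 2 * M α * M β)
    (ζ : ℝ) (hζ : ζ = 1 - (univ.sup' univ_nonempty M) / (∑ α, M α))
    {d : ℕ} (hd : 1 ≤ d)
    (μ : I → Measure (EuclideanSpace ℝ (Fin d)))
    [∀ α, IsFiniteMeasure (μ α)]
    (hμ : ∀ α, ((μ α) Set.univ).toReal = M α)
    (e : I → EuclideanSpace ℝ (Fin d) → ℝ)
    (he_meas : ∀ α, Measurable (e α))
    (he_nonneg : ∀ α x, 0 ≤ e α x)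
    (he_int : ∀ α, Integrable (e α) (μ α)) :
    (ζ * lam / (∑ α, M α)) *
          ∑ α, ∑ β, ∫ x, ∫ y, (e α x + e β y) ∂(μ β) ∂(μ α)
        ≤ ∑ α, ∑ β, k α β * ∫ x, ∫ y, (e α x + e β y) ∂(μ β) ∂(μ α)
      ∧ (ζ * lam / (∑ α, M α)) *
          ∑ α, ∑ β, ∫ x, ∫ y, (e α x + e β y) ∂(μ β) ∂(μ α)
        = 2 * ζ * lam * ∑ α, ∫ x, e α x ∂(μ α) :=
  stmt_6_general M hM k hk_nonneg hk_symm lam hlam hgap ζ hζ μ hμ e he_nonneg he_int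
end

section
/- Grönwall step of Theorem 2.1 (fractional-exponential flocking decay): let η, γ ≥ 0 with ηγ < 1, let ζ, C_K, C_D, R > 0, let λ : [0,∞) → [0,∞) be nonincreasing with λ(r) ≥ C_K (1+r)^{−η} for all r ≥ R, let D : [0,∞) → [0,∞) be continuous with D(t) ≤ C_D (1+t)^{γ} for all t ≥ 0, and let F : [0,∞) → [0,∞) be differentiable with F′(t) ≤ −2ζ λ(D(t)) F(t) for all t ≥ 0. Then there exist constants C_R > 0 and c > 0, depending only on η, γ, ζ, C_K, C_D, R, such that F(t) ≤ C_R · exp(−c t^{1−ηγ}) · F(0) for all t ≥ 0. -/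
open Real Set

/- The rate of decay is bounded below by `c₀ (1 + t)^{-ηγ}` because the diameter grows at most like
`(1 + t)^γ` and `λ` is nonincreasing with a power-law lower bound. The weight `exp (b (1 + t)^{1-ηγ})`,
whose logarithmic derivative is `c₀ (1 + t)^{-ηγ}` for a suitable `b`, then makes `F` times the weight
nonincreasing, which is the claimed fractional-exponential decay. -/

theorem le_exp_sub_mul_of_deriv_le_neg_mul {F u u' : ℝ → ℝ} (hF : Differentiable ℝ F)
    (hu : ∀ t ≥ 0, HasDerivAt u (u' t) t) (hF' : ∀ t ≥ 0, deriv F t ≤ -u' t * F t)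
    {t : ℝ} (ht : 0 ≤ t) : F t ≤ exp (u 0 - u t) * F 0 := by
  have hG : ∀ s ≥ 0, HasDerivAt (fun s => F s * exp (u s))
      (deriv F s * exp (u s) + F s * (exp (u s) * u' s)) s :=
    fun s hs => (hF s).hasDerivAt.mul (hu s hs).exp
  have hG_anti : AntitoneOn (fun s => F s * exp (u s)) (Ici 0) := by
    refine antitoneOn_of_hasDerivWithinAt_nonpos (convex_Ici 0)
      (f' := fun s => deriv F s * exp (u s) + F s * (exp (u s) * u' s))
      (fun s hs => (hG s hs).continuousAt.continuousWithinAt) (fun s hs => ?_) (fun s hs => ?_)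
    all_goals rw [interior_Ici] at hs
    · exact (hG s (le_of_lt hs)).hasDerivWithinAt
    · calc deriv F s * exp (u s) + F s * (exp (u s) * u' s)
          = exp (u s) * (deriv F s + u' s * F s) := by ring
        _ ≤ 0 := mul_nonpos_of_nonneg_of_nonpos (exp_pos _).le (by linarith [hF' s (le_of_lt hs)])
  have hGt : F t * exp (u t) ≤ F 0 * exp (u 0) := hG_anti self_mem_Ici ht ht
  rw [exp_sub, div_mul_eq_mul_div, le_div_iff₀ (exp_pos _)]
  linarith

theorem hasDerivAt_mul_one_add_rpow (b β : ℝ) {t : ℝ} (ht : -1 < t) :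
    HasDerivAt (fun s => b * (1 + s) ^ β) (b * β * (1 + t) ^ (β - 1)) t := by
  have := (((hasDerivAt_id t).const_add 1).rpow_const (p := β)
    (Or.inl (by simp only [id]; linarith))).const_mul b
  simpa only [id, one_mul, mul_assoc] using this

theorem exp_sub_mul_one_add_rpow_le {b β t : ℝ} (hb : 0 ≤ b) (hβ : 0 ≤ β) (ht : 0 ≤ t) :
    exp (b * (1 + 0) ^ β - b * (1 + t) ^ β) ≤ exp b * exp (-b * t ^ β) := by
  rw [← exp_add, exp_le_exp, add_zero, one_rpow]
  nlinarith [rpow_le_rpow ht (le_add_of_nonneg_left zero_le_one : t ≤ 1 + t) hβ]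

theorem mul_rpow_neg_le_one_add_add_mul_rpow_neg {R C η x : ℝ} (hR : 0 ≤ R) (hC : 0 ≤ C)
    (hη : 0 ≤ η) (hx : 1 ≤ x) :
    (1 + R + C) ^ (-η) * x ^ (-η) ≤ (1 + (R + C * x)) ^ (-η) := by
  rw [← mul_rpow (by positivity) (by positivity)]
  exact rpow_le_rpow_of_nonpos (by positivity) (by nlinarith) (neg_nonpos.mpr hη)

theorem le_lam_of_le_mul_one_add_rpow {lam : ℝ → ℝ} {η γ C_K C_D R t d : ℝ}
    (hη : 0 ≤ η) (hγ : 0 ≤ γ) (hCK : 0 ≤ C_K) (hCD : 0 ≤ C_D) (hR : 0 ≤ R)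
    (hlam_anti : AntitoneOn lam (Ici 0)) (hlam_lb : ∀ r ≥ R, C_K * (1 + r) ^ (-η) ≤ lam r)
    (ht : 0 ≤ t) (hd : 0 ≤ d) (hdt : d ≤ C_D * (1 + t) ^ γ) :
    C_K * (1 + R + C_D) ^ (-η) * (1 + t) ^ (-(η * γ)) ≤ lam d := by
  have h1t : 0 ≤ 1 + t := by linarith
  have hx : 1 ≤ (1 + t) ^ γ := one_le_rpow (by linarith) hγ
  calc C_K * (1 + R + C_D) ^ (-η) * (1 + t) ^ (-(η * γ))
      = C_K * ((1 + R + C_D) ^ (-η) * ((1 + t) ^ γ) ^ (-η)) := by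
        rw [← rpow_mul h1t, mul_assoc, mul_comm γ, neg_mul]
    _ ≤ C_K * (1 + (R + C_D * (1 + t) ^ γ)) ^ (-η) :=
        mul_le_mul_of_nonneg_left (mul_rpow_neg_le_one_add_add_mul_rpow_neg hR hCD hη hx) hCK
    _ ≤ lam (R + C_D * (1 + t) ^ γ) := hlam_lb _ (le_add_of_nonneg_right (by positivity))
    _ ≤ lam d := hlam_anti hd (mem_Ici.mpr (by positivity)) (by linarith)

theorem stmt_8_general (η γ ζ C_K C_D R : ℝ)
    (hη : 0 ≤ η) (hγ : 0 ≤ γ) (hηγ : η * γ < 1)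
    (hζ : 0 < ζ) (hCK : 0 < C_K) (hCD : 0 < C_D) (hR : 0 < R)
    (lam : ℝ → ℝ)
    (hlam_anti : AntitoneOn lam (Set.Ici 0))
    (hlam_lb : ∀ r ≥ R, C_K * (1 + r) ^ (-η) ≤ lam r)
    (D : ℝ → ℝ)
    (hD_nonneg : ∀ t ≥ (0:ℝ), 0 ≤ D t)
    (hD_ub : ∀ t ≥ (0:ℝ), D t ≤ C_D * (1 + t) ^ γ)
    (F : ℝ → ℝ) (hF_nonneg : ∀ t ≥ (0:ℝ), 0 ≤ F t)
    (hF_diff : Differentiable ℝ F)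
    (hF' : ∀ t ≥ (0:ℝ), deriv F t ≤ -2 * ζ * lam (D t) * F t) :
    ∃ C_R > 0, ∃ c > 0, ∀ t ≥ (0:ℝ),
      F t ≤ C_R * Real.exp (-c * t ^ (1 - η * γ)) * F 0 := by
  have hβ : 0 < 1 - η * γ := by linarith
  set c₀ := C_K * (1 + R + C_D) ^ (-η)
  set b := 2 * ζ * c₀ / (1 - η * γ)
  have hb : 0 < b := by positivity
  have hbβ : b * (1 - η * γ) = 2 * ζ * c₀ := div_mul_cancel₀ _ hβ.ne'
  have hF'' : ∀ t ≥ (0:ℝ),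
      deriv F t ≤ -(b * (1 - η * γ) * (1 + t) ^ (1 - η * γ - 1)) * F t := by
    intro t ht
    have hrate := le_lam_of_le_mul_one_add_rpow hη hγ hCK.le hCD.le hR.le hlam_anti hlam_lb ht
      (hD_nonneg t ht) (hD_ub t ht)
    have hdecay : 2 * ζ * (c₀ * (1 + t) ^ (-(η * γ))) * F t ≤ 2 * ζ * lam (D t) * F t :=
      mul_le_mul_of_nonneg_right (mul_le_mul_of_nonneg_left hrate (by positivity)) (hF_nonneg t ht)
    rw [hbβ, sub_sub_cancel_left]
    linarith [hF' t ht]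
  refine ⟨exp b, exp_pos b, b, hb, fun t ht => ?_⟩
  calc F t ≤ exp (b * (1 + 0) ^ (1 - η * γ) - b * (1 + t) ^ (1 - η * γ)) * F 0 :=
        le_exp_sub_mul_of_deriv_le_neg_mul hF_diff
          (fun s hs => hasDerivAt_mul_one_add_rpow b _ (by linarith)) hF'' ht
    _ ≤ exp b * exp (-b * t ^ (1 - η * γ)) * F 0 :=
        mul_le_mul_of_nonneg_right (exp_sub_mul_one_add_rpow_le hb.le hβ.le ht)
          (hF_nonneg 0 le_rfl)

/-- Grönwall step of Theorem 2.1 (fractional-exponential flocking decay). -/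
theorem stmt_8 (η γ ζ C_K C_D R : ℝ)
    (hη : 0 ≤ η) (hγ : 0 ≤ γ) (hηγ : η * γ < 1)
    (hζ : 0 < ζ) (hCK : 0 < C_K) (hCD : 0 < C_D) (hR : 0 < R)
    (lam : ℝ → ℝ) (hlam_nonneg : ∀ r ≥ (0:ℝ), 0 ≤ lam r)
    (hlam_anti : AntitoneOn lam (Set.Ici 0))
    (hlam_lb : ∀ r ≥ R, C_K * (1 + r) ^ (-η) ≤ lam r)
    (D : ℝ → ℝ) (hD_cont : ContinuousOn D (Set.Ici 0))
    (hD_nonneg : ∀ t ≥ (0:ℝ), 0 ≤ D t)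
    (hD_ub : ∀ t ≥ (0:ℝ), D t ≤ C_D * (1 + t) ^ γ)
    (F : ℝ → ℝ) (hF_nonneg : ∀ t ≥ (0:ℝ), 0 ≤ F t)
    (hF_diff : Differentiable ℝ F)
    (hF' : ∀ t ≥ (0:ℝ), deriv F t ≤ -2 * ζ * lam (D t) * F t) :
    ∃ C_R > 0, ∃ c > 0, ∀ t ≥ (0:ℝ),
      F t ≤ C_R * Real.exp (-c * t ^ (1 - η * γ)) * F 0 :=
  stmt_8_general η γ ζ C_K C_D R hη hγ hηγ hζ hCK hCD hR lam hlam_anti hlam_lb D hD_nonneg hD_ub F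
    hF_nonneg hF_diff hF'
end

section
/- Dispersion bound from the enstrophy estimate (eqs. (3.7)–(3.8)): let I be a finite index set with n ≥ 1 elements, σ ∈ (0,1], q > 1, C > 0, A ≥ 0. Suppose D_α : [0,∞) → (0,∞) is differentiable and g_α : [0,∞) → [0,∞) is continuous for each α ∈ I, with D_α′(t) ≤ C g_α(t) D_α(t)^{1−σ} for all t ≥ 0 and ∫₀ᵗ ∑_{α∈I} g_α(τ)^{q} dτ ≤ A^{q} for all t ≥ 0. Then for all t ≥ 0, ( ∑_{α∈I} D_α(t) )^{σ} ≤ ∑_{α∈I} D_α(0)^{σ} + σ C n^{(q−1)/q} A t^{(q−1)/q}; in particular there exists C_D > 0 such that ∑_{α∈I} D_α(t) ≤ C_D (1+t)^{(q−1)/(qσ)} for all t ≥ 0. -/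
/-!
Since `(D^σ)' = σ D^(σ-1) D' ≤ σ C g`, each `D_α^σ` grows by at most `σ C ∫₀ᵗ g_α`. Hölder's
inequality in time and then over the `n` species bounds `∑_α ∫₀ᵗ g_α` by
`n^((q-1)/q) A t^((q-1)/q)`, and subadditivity of `x ↦ x^σ` for `σ ≤ 1` passes from `∑_α D_α^σ`
to `(∑_α D_α)^σ`. Taking the `σ`-th root gives the algebraic dispersion rate.
-/

open Finset MeasureTheory

lemma Real.rpow_sum_le_sum_rpow {ι : Type*} (s : Finset ι) {f : ι → ℝ} {p : ℝ}
    (hp0 : 0 < p) (hp1 : p ≤ 1) (hf : ∀ i ∈ s, 0 ≤ f i) :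
    (∑ i ∈ s, f i) ^ p ≤ ∑ i ∈ s, f i ^ p :=
  le_sum_of_subadditive_on_pred (· ^ p) (0 ≤ ·) (Real.zero_rpow hp0.ne').le
    (fun _ _ hx hy => Real.rpow_add_le_add_rpow hx hy hp0.le hp1)
    (fun _ _ => add_nonneg) f hf

lemma Real.sum_le_card_rpow_mul_sum_rpow {ι : Type*} (s : Finset ι) {f : ι → ℝ} {q : ℝ}
    (hq : 1 < q) (hf : ∀ i ∈ s, 0 ≤ f i) :
    ∑ i ∈ s, f i ≤ (#s : ℝ) ^ ((q - 1) / q) * (∑ i ∈ s, f i ^ q) ^ (1 / q) := by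
  have hpq := (Real.HolderConjugate.conjExponent hq).symm
  simpa [Real.conjExponent, inv_div] using
    Real.inner_le_Lp_mul_Lq_of_nonneg s hpq (f := fun _ => (1 : ℝ)) (fun _ _ => zero_le_one) hf

lemma intervalIntegral_le_rpow_mul_integral_rpow {a b q : ℝ} (hab : a ≤ b) (hq : 1 < q)
    {g : ℝ → ℝ} (hg : ContinuousOn g (Set.Icc a b)) (hg0 : ∀ x ∈ Set.Icc a b, 0 ≤ g x) :
    ∫ x in a..b, g x ≤ (b - a) ^ ((q - 1) / q) * (∫ x in a..b, g x ^ q) ^ (1 / q) := by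
  have hpq := Real.HolderConjugate.conjExponent hq
  have : IsFiniteMeasure (volume.restrict (Set.Ioc a b)) := by
    rw [isFiniteMeasure_restrict]; exact measure_Ioc_lt_top.ne
  obtain ⟨M, hM⟩ := isCompact_Icc.exists_bound_of_continuousOn hg
  have hIoc : Set.Ioc a b ⊆ Set.Icc a b := Set.Ioc_subset_Icc_self
  have hgLq : MemLp g (ENNReal.ofReal q) (volume.restrict (Set.Ioc a b)) :=
    .of_bound ((hg.mono hIoc).aestronglyMeasurable measurableSet_Ioc) M
      ((ae_restrict_iff' measurableSet_Ioc).2 (.of_forall fun x hx => hM x (hIoc hx)))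
  have hg0' : 0 ≤ᵐ[volume.restrict (Set.Ioc a b)] g :=
    (ae_restrict_iff' measurableSet_Ioc).2 (.of_forall fun x hx => hg0 x (hIoc hx))
  have := integral_mul_le_Lp_mul_Lq_of_nonneg hpq.symm (.of_forall fun _ => zero_le_one) hg0'
    (memLp_const 1) hgLq
  simpa [intervalIntegral.integral_of_le hab, Real.conjExponent, inv_div, hab] using this

lemma rpow_le_rpow_add_integral_of_deriv_le {σ : ℝ} (hσ : 0 ≤ σ) {D f : ℝ → ℝ}
    (hD : ∀ t, 0 < D t) (hD_diff : Differentiable ℝ D) (hf : Continuous f)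
    (hD' : ∀ t ≥ (0 : ℝ), deriv D t ≤ f t * D t ^ (1 - σ)) {t : ℝ} (ht : 0 ≤ t) :
    D t ^ σ ≤ D 0 ^ σ + σ * ∫ τ in (0 : ℝ)..t, f τ := by
  set F : ℝ → ℝ := fun s => D s ^ σ - σ * ∫ τ in (0 : ℝ)..s, f τ
  have hF : ∀ s, HasDerivAt F (deriv D s * σ * D s ^ (σ - 1) - σ * f s) s := fun s =>
    ((hD_diff s).hasDerivAt.rpow_const (.inl (hD s).ne')).sub
      ((hf.integral_hasStrictDerivAt 0 s).hasDerivAt.const_mul σ)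
  have hF' : ∀ s ≥ (0 : ℝ), deriv D s * σ * D s ^ (σ - 1) ≤ σ * f s := fun s hs =>
    calc deriv D s * σ * D s ^ (σ - 1)
        ≤ f s * D s ^ (1 - σ) * σ * D s ^ (σ - 1) := by
          gcongr
          exacts [(Real.rpow_pos_of_pos (hD s) _).le, hD' s hs]
      _ = σ * f s * (D s ^ (1 - σ) * D s ^ (σ - 1)) := by ring
      _ = σ * f s := by rw [← Real.rpow_add (hD s)]; simp
  have hanti : AntitoneOn F (Set.Ici 0) :=
    antitoneOn_of_deriv_nonpos (convex_Ici 0) (fun s _ => (hF s).continuousAt.continuousWithinAt)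
      (fun s _ => (hF s).differentiableAt.differentiableWithinAt)
      (fun s hs => by
        rw [(hF s).deriv, sub_nonpos]
        exact hF' s (interior_subset hs))
  have := hanti Set.self_mem_Ici ht ht
  simp only [F, intervalIntegral.integral_same, mul_zero, sub_zero] at this
  linarith

lemma sum_intervalIntegral_le_of_integral_sum_rpow_le {ι : Type*} [Fintype ι] {q A t : ℝ}
    (hq : 1 < q) (hA : 0 ≤ A) (ht : 0 ≤ t) {g : ι → ℝ → ℝ} (hg : ∀ i, Continuous (g i))
    (hg0 : ∀ i x, 0 ≤ g i x) (hint : ∫ τ in (0 : ℝ)..t, ∑ i, g i τ ^ q ≤ A ^ q) :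
    ∑ i, ∫ τ in (0 : ℝ)..t, g i τ
      ≤ (Fintype.card ι : ℝ) ^ ((q - 1) / q) * A * t ^ ((q - 1) / q) := by
  have hq0 : 0 < q := zero_lt_one.trans hq
  set a : ι → ℝ := fun i => ∫ τ in (0 : ℝ)..t, g i τ ^ q
  have ha0 : ∀ i, 0 ≤ a i := fun i =>
    intervalIntegral.integral_nonneg ht fun τ _ => Real.rpow_nonneg (hg0 i τ) q
  have ha_root : ∀ i, (a i ^ (1 / q)) ^ q = a i := fun i => by
    rw [← Real.rpow_mul (ha0 i), one_div_mul_cancel hq0.ne', Real.rpow_one]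
  have hsum_a : ∑ i, a i ≤ A ^ q := by
    rwa [← intervalIntegral.integral_finsetSum fun i _ =>
      ((hg i).rpow_const fun _ => .inr hq0.le).intervalIntegrable _ _]
  calc ∑ i, ∫ τ in (0 : ℝ)..t, g i τ
      ≤ ∑ i, (t - 0) ^ ((q - 1) / q) * a i ^ (1 / q) := sum_le_sum fun i _ =>
        intervalIntegral_le_rpow_mul_integral_rpow ht hq (hg i).continuousOn fun x _ => hg0 i x
    _ = t ^ ((q - 1) / q) * ∑ i, a i ^ (1 / q) := by rw [sub_zero, mul_sum]
    _ ≤ t ^ ((q - 1) / q) * ((Fintype.card ι : ℝ) ^ ((q - 1) / q) * (∑ i, a i) ^ (1 / q)) := by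
        gcongr
        simpa only [ha_root, card_univ] using
          Real.sum_le_card_rpow_mul_sum_rpow univ (f := fun i => a i ^ (1 / q)) hq
            fun i _ => Real.rpow_nonneg (ha0 i) _
    _ ≤ t ^ ((q - 1) / q) * ((Fintype.card ι : ℝ) ^ ((q - 1) / q) * (A ^ q) ^ (1 / q)) := by
        gcongr
        exact sum_nonneg fun i _ => ha0 i
    _ = (Fintype.card ι : ℝ) ^ ((q - 1) / q) * A * t ^ ((q - 1) / q) := by
        rw [← Real.rpow_mul hA, mul_one_div_cancel hq0.ne', Real.rpow_one]
        ring

lemma rpow_sum_le_of_deriv_le_of_integral_sum_rpow_le {I : Type*} [Fintype I]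
    {σ q C A : ℝ} (hσ0 : 0 < σ) (hσ1 : σ ≤ 1) (hq : 1 < q) (hC : 0 ≤ C) (hA : 0 ≤ A)
    {D g : I → ℝ → ℝ} (hD_pos : ∀ α t, 0 < D α t) (hD_diff : ∀ α, Differentiable ℝ (D α))
    (hg_cont : ∀ α, Continuous (g α)) (hg_nonneg : ∀ α t, 0 ≤ g α t)
    (hD' : ∀ α, ∀ t ≥ (0 : ℝ), deriv (D α) t ≤ C * g α t * D α t ^ (1 - σ))
    {t : ℝ} (ht : 0 ≤ t) (hg_int : ∫ τ in (0 : ℝ)..t, ∑ α, g α τ ^ q ≤ A ^ q) :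
    (∑ α, D α t) ^ σ ≤ (∑ α, D α 0 ^ σ)
      + σ * C * (Fintype.card I : ℝ) ^ ((q - 1) / q) * A * t ^ ((q - 1) / q) := by
  have hgronwall : ∀ α, D α t ^ σ ≤ D α 0 ^ σ + σ * (C * ∫ τ in (0 : ℝ)..t, g α τ) := fun α => by
    simpa only [intervalIntegral.integral_const_mul] using
      rpow_le_rpow_add_integral_of_deriv_le hσ0.le (hD_pos α) (hD_diff α)
        (f := fun τ => C * g α τ) (by fun_prop) (hD' α) ht
  calc (∑ α, D α t) ^ σ ≤ ∑ α, D α t ^ σ :=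
        Real.rpow_sum_le_sum_rpow univ hσ0 hσ1 fun α _ => (hD_pos α t).le
    _ ≤ ∑ α, (D α 0 ^ σ + σ * (C * ∫ τ in (0 : ℝ)..t, g α τ)) :=
        sum_le_sum fun α _ => hgronwall α
    _ = (∑ α, D α 0 ^ σ) + σ * C * ∑ α, ∫ τ in (0 : ℝ)..t, g α τ := by
        rw [sum_add_distrib, mul_assoc, ← mul_sum, ← mul_sum]
    _ ≤ (∑ α, D α 0 ^ σ)
          + σ * C * ((Fintype.card I : ℝ) ^ ((q - 1) / q) * A * t ^ ((q - 1) / q)) := by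
        gcongr
        exact sum_intervalIntegral_le_of_integral_sum_rpow_le hq hA ht hg_cont hg_nonneg hg_int
    _ = _ := by ring

lemma le_mul_one_add_rpow_of_rpow_le {x a b t e σ : ℝ} (hx : 0 ≤ x) (hσ : 0 < σ) (ha : 0 ≤ a)
    (hb : 0 ≤ b) (ht : 0 ≤ t) (he : 0 ≤ e) (h : x ^ σ ≤ a + b * t ^ e) :
    x ≤ (a + b) ^ (1 / σ) * (1 + t) ^ (e / σ) := by
  have h1t : (1 : ℝ) ≤ (1 + t) ^ e := Real.one_le_rpow (by linarith) he
  have hte : t ^ e ≤ (1 + t) ^ e := by gcongr; linarith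
  have hxσ : x ^ σ ≤ (a + b) * (1 + t) ^ e := by nlinarith
  calc x = (x ^ σ) ^ (1 / σ) := by rw [← Real.rpow_mul hx, mul_one_div_cancel hσ.ne', Real.rpow_one]
    _ ≤ ((a + b) * (1 + t) ^ e) ^ (1 / σ) := by gcongr
    _ = (a + b) ^ (1 / σ) * (1 + t) ^ (e / σ) := by
      rw [Real.mul_rpow (by positivity) (by positivity), ← Real.rpow_mul (by linarith), mul_one_div]

/-- Dispersion bound from the enstrophy estimate (eqs. (3.7)–(3.8)). -/
theorem stmt_10 {I : Type*} [Fintype I] [Nonempty I]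
    (σ q C A : ℝ) (hσ0 : 0 < σ) (hσ1 : σ ≤ 1) (hq : 1 < q) (hC : 0 < C) (hA : 0 ≤ A)
    (D : I → ℝ → ℝ) (g : I → ℝ → ℝ)
    (hD_pos : ∀ α t, 0 < D α t) (hD_diff : ∀ α, Differentiable ℝ (D α))
    (hg_cont : ∀ α, Continuous (g α)) (hg_nonneg : ∀ α t, 0 ≤ g α t)
    (hD' : ∀ α, ∀ t ≥ (0:ℝ), deriv (D α) t ≤ C * g α t * D α t ^ (1 - σ))
    (hg_int : ∀ t ≥ (0:ℝ), (∫ τ in (0:ℝ)..t, ∑ α, g α τ ^ q) ≤ A ^ q) :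
    (∀ t ≥ (0:ℝ),
      (∑ α, D α t) ^ σ
        ≤ (∑ α, D α 0 ^ σ)
            + σ * C * (Fintype.card I : ℝ) ^ ((q - 1) / q) * A * t ^ ((q - 1) / q)) ∧
    ∃ C_D > 0, ∀ t ≥ (0:ℝ), ∑ α, D α t ≤ C_D * (1 + t) ^ ((q - 1) / (q * σ)) := by
  have bound := fun t (ht : t ≥ 0) => rpow_sum_le_of_deriv_le_of_integral_sum_rpow_le hσ0 hσ1 hq
    hC.le hA hD_pos hD_diff hg_cont hg_nonneg hD' ht (hg_int t ht)
  have hD0 : 0 < ∑ α, D α 0 ^ σ :=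
    sum_pos (fun α _ => Real.rpow_pos_of_pos (hD_pos α 0) σ) univ_nonempty
  refine ⟨bound, ((∑ α, D α 0 ^ σ) + σ * C * (Fintype.card I : ℝ) ^ ((q - 1) / q) * A) ^ (1 / σ),
    by positivity, fun t ht => ?_⟩
  rw [← div_div]
  exact le_mul_one_add_rpow_of_rpow_le (sum_nonneg fun α _ => (hD_pos α t).le) hσ0 hD0.le
    (by positivity) ht (div_nonneg (by linarith) (by linarith)) (bound t ht)
end

section
/- Weighted enstrophy integral bound (first step of Appendix C): let c > 0, μ ∈ (0,1], C_R > 0. Suppose F : [0,∞) → [0,∞) is differentiable, H : [0,∞) → [0,∞) is continuous, F′(t) ≤ −H(t) for all t ≥ 0, and F(t) ≤ C_R e^{−c t^{μ}} F(0) for all t ≥ 0. Then for all t ≥ 0, ∫₀ᵗ e^{c τ^{μ}} H(τ) dτ ≤ F(0) ( 1 + C_R c t^{μ} ). -/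
/-- Weighted enstrophy integral bound (first step of Appendix C). -/
theorem stmt_11 (c μ C_R : ℝ) (hc : 0 < c) (hμ0 : 0 < μ) (hμ1 : μ ≤ 1) (hCR : 0 < C_R)
    (F H : ℝ → ℝ) (hF_nonneg : ∀ t ≥ (0:ℝ), 0 ≤ F t) (hH_nonneg : ∀ t ≥ (0:ℝ), 0 ≤ H t)
    (hF_diff : Differentiable ℝ F) (hH_cont : Continuous H)
    (hF' : ∀ t ≥ (0:ℝ), deriv F t ≤ -H t)
    (hF_decay : ∀ t ≥ (0:ℝ), F t ≤ C_R * Real.exp (-c * t ^ μ) * F 0) :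
    ∀ t ≥ (0:ℝ),
      (∫ τ in (0:ℝ)..t, Real.exp (c * τ ^ μ) * H τ) ≤ F 0 * (1 + C_R * c * t ^ μ) := by
  intro t ht
  set g : ℝ → ℝ := fun τ => Real.exp (c * τ ^ μ) with hgdef
  have hrpow_cont : Continuous fun x : ℝ => x ^ μ := by
    rw [continuous_iff_continuousAt]
    intro x
    exact Real.continuousAt_rpow_const x μ (Or.inr hμ0.le)
  have hg_cont : Continuous g := Real.continuous_exp.comp (continuous_const.mul hrpow_cont)
  have hgH_cont : Continuous fun τ => g τ * H τ := hg_cont.mul hH_cont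
  set Φ : ℝ → ℝ := fun τ =>
    (∫ s in (0:ℝ)..τ, g s * H s) + g τ * F τ - F 0 * (1 + C_R * c * τ ^ μ) with hΦdef
  have hΦ0 : Φ 0 = 0 := by
    simp [hΦdef, hgdef, Real.zero_rpow hμ0.ne', intervalIntegral.integral_same]
  have hInt : ∀ b : ℝ, HasDerivAt (fun u => ∫ s in (0:ℝ)..u, g s * H s) (g b * H b) b :=
    fun b => (hgH_cont.integral_hasStrictDerivAt 0 b).hasDerivAt
  have hderiv : ∀ τ ∈ Set.Ioo (0:ℝ) t,
      HasDerivAt Φ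
        (g τ * H τ + ((g τ * (c * (μ * τ ^ (μ - 1)))) * F τ + g τ * deriv F τ)
          - F 0 * (C_R * c * (μ * τ ^ (μ - 1)))) τ := by
    intro τ hτ
    have hτ0 : τ ≠ 0 := ne_of_gt hτ.1
    have hrpow : HasDerivAt (fun x : ℝ => x ^ μ) (μ * τ ^ (μ - 1)) τ :=
      Real.hasDerivAt_rpow_const (Or.inl hτ0)
    have hgτ : HasDerivAt g (g τ * (c * (μ * τ ^ (μ - 1)))) τ := by
      have := (hrpow.const_mul c).exp
      simpa [hgdef, mul_comm, mul_assoc, mul_left_comm] using this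
    have hgF : HasDerivAt (fun τ => g τ * F τ)
        ((g τ * (c * (μ * τ ^ (μ - 1)))) * F τ + g τ * deriv F τ) τ :=
      hgτ.mul (hF_diff τ).hasDerivAt
    have hlast : HasDerivAt (fun τ : ℝ => F 0 * (1 + C_R * c * τ ^ μ))
        (F 0 * (C_R * c * (μ * τ ^ (μ - 1)))) τ := by
      have := ((hrpow.const_mul (C_R * c)).const_add 1).const_mul (F 0)
      simpa [mul_comm, mul_assoc, mul_left_comm] using this
    exact ((hInt τ).add hgF).sub hlast
  have hderiv_nonpos : ∀ τ ∈ Set.Ioo (0:ℝ) t, deriv Φ τ ≤ 0 := by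
    intro τ hτ
    rw [(hderiv τ hτ).deriv]
    have hτ0 : (0:ℝ) ≤ τ := le_of_lt hτ.1
    have hgpos : 0 < g τ := Real.exp_pos _
    have h1 : g τ * deriv F τ ≤ g τ * (-H τ) :=
      mul_le_mul_of_nonneg_left (hF' τ hτ0) hgpos.le
    have h2 : g τ * F τ ≤ C_R * F 0 := by
      have := mul_le_mul_of_nonneg_left (hF_decay τ hτ0) hgpos.le
      calc g τ * F τ ≤ g τ * (C_R * Real.exp (-c * τ ^ μ) * F 0) := this
        _ = C_R * F 0 * (Real.exp (c * τ ^ μ) * Real.exp (-c * τ ^ μ)) := by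
            simp only [hgdef]; ring
        _ = C_R * F 0 := by rw [← Real.exp_add]; simp
    have hpw : 0 ≤ c * (μ * τ ^ (μ - 1)) := by positivity
    nlinarith [mul_le_mul_of_nonneg_right h2 hpw]
  have hcontΦ : ContinuousOn Φ (Set.Icc 0 t) := by
    apply ContinuousOn.sub
    · exact ((intervalIntegral.continuous_primitive (fun a b => hgH_cont.intervalIntegrable a b)
        (0:ℝ)).add (hg_cont.mul hF_diff.continuous)).continuousOn
    · exact (continuous_const.mul
        (continuous_const.add (continuous_const.mul hrpow_cont))).continuousOn
  have hAnti : AntitoneOn Φ (Set.Icc 0 t) := by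
    have hint : interior (Set.Icc (0:ℝ) t) = Set.Ioo 0 t := interior_Icc
    apply antitoneOn_of_deriv_nonpos (convex_Icc 0 t) hcontΦ
    · rw [hint]
      exact fun τ hτ => (hderiv τ hτ).differentiableAt.differentiableWithinAt
    · rw [hint]; exact hderiv_nonpos
  have hΦt : Φ t ≤ 0 := by
    have := hAnti (Set.left_mem_Icc.mpr ht) (Set.right_mem_Icc.mpr ht) ht
    rwa [hΦ0] at this
  have hgFt : 0 ≤ g t * F t := mul_nonneg (Real.exp_pos _).le (hF_nonneg t ht)
  have : (∫ s in (0:ℝ)..t, g s * H s) + g t * F t ≤ F 0 * (1 + C_R * c * t ^ μ) := by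
    have := hΦt
    simp only [hΦdef] at this
    linarith
  calc (∫ τ in (0:ℝ)..t, Real.exp (c * τ ^ μ) * H τ)
      = ∫ s in (0:ℝ)..t, g s * H s := rfl
    _ ≤ F 0 * (1 + C_R * c * t ^ μ) := by linarith
end
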